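/- Let L be a complete modular lattice and 𝔪 a submonoid with zero of End_lin(L), and suppose L is 𝔪-abelian-endoregular. For φ ∈ 𝔪 the following are equivalent: (a) φ is injective (equivalently, ker_φ = ⊥); (b) φ is a lattice isomorphism of L; (c) φ is surjective (equivalently, φ(⊤) = ⊤). -/

import Mathlib

section Preamble

variable {α β : Type*}

/-- A linear morphism between complete lattices: there is a kernel element `k` such that
`φ x = φ (x ⊔ k)` for all `x`, and `φ` restricts to an isomorphism of (complete) lattices
from the interval `[k, ⊤]` onto `[⊥, φ ⊤]`. -/
def IsLinMor [CompleteLattice α] [CompleteLattice β] (φ : α → β) : Prop :=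
  ∃ k : α, (∀ x, φ x = φ (x ⊔ k)) ∧
    ∃ e : Set.Icc k (⊤ : α) ≃o Set.Icc (⊥ : β) (φ ⊤),
      ∀ x : Set.Icc k (⊤ : α), (e x : β) = φ (x : α)

/-- The kernel of a linear morphism: the largest element sent to `⊥`. -/
noncomputable def linKer [CompleteLattice α] [CompleteLattice β] (φ : α → β) : α :=
  sSup {a | φ a = ⊥}

/-- A submonoid with zero of the monoid of linear endomorphisms of `α`. -/
structure IsLinSubmonoid [CompleteLattice α] (M : Set (α → α)) : Prop where
  lin_mem : ∀ φ ∈ M, IsLinMor φ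
  id_mem : (id : α → α) ∈ M
  zero_mem : (fun _ : α => (⊥ : α)) ∈ M
  comp_mem : ∀ φ ∈ M, ∀ ψ ∈ M, φ ∘ ψ ∈ M

/-- The projection onto `x` along a complement `x'`. -/
def proj [CompleteLattice α] (x x' : α) : α → α := fun a => (a ⊔ x') ⊓ x

/-- `M` is closed under complements: whenever `φ ∈ M` restricts to a linear isomorphism
`[⊥, x] → [⊥, y]` with `x, y` complemented, the composite `ι_x ∘ (φ|_x)⁻¹ ∘ π_y` is in `M`. -/
def ClosedUnderComplements [CompleteLattice α] (M : Set (α → α)) : Prop :=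
  ∀ φ ∈ M, ∀ x x' y y' : α, IsCompl x x' → IsCompl y y' →
    ∀ e : Set.Icc (⊥ : α) x ≃o Set.Icc (⊥ : α) y,
      (∀ a : Set.Icc (⊥ : α) x, ((e a : Set.Icc (⊥ : α) y) : α) = φ (a : α)) →
      (fun a : α =>
        ((e.symm ⟨(a ⊔ y') ⊓ y, bot_le, inf_le_right⟩ : Set.Icc (⊥ : α) x) : α)) ∈ M

/-- `L` is `M`-endoregular: `M` is a regular monoid. -/
def MEndoregular [CompleteLattice α] (M : Set (α → α)) : Prop :=
  ∀ φ ∈ M, ∃ ψ ∈ M, φ ∘ ψ ∘ φ = φ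

/-- `L` is `M`-Rickart: kernels of members of `M` have complements. -/
def MRickart [CompleteLattice α] (M : Set (α → α)) : Prop :=
  ∀ φ ∈ M, ∃ y, IsCompl (linKer φ) y

/-- `L` is dual-`M`-Rickart: images of members of `M` have complements. -/
def MDualRickart [CompleteLattice α] (M : Set (α → α)) : Prop :=
  ∀ φ ∈ M, ∃ y, IsCompl (φ ⊤) y

/-- The `M`-C2 condition. -/
def MC2 [CompleteLattice α] (M : Set (α → α)) : Prop :=
  ∀ a x x' : α, IsCompl x x' →
    ∀ e : Set.Icc (⊥ : α) x ≃o Set.Icc (⊥ : α) a,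
      ((fun b : α =>
          ((e ⟨(b ⊔ x') ⊓ x, bot_le, inf_le_right⟩ : Set.Icc (⊥ : α) a) : α)) ∈ M) →
      ∃ a', IsCompl a a'

/-- The `M`-D2 condition. -/
def MD2 [CompleteLattice α] (M : Set (α → α)) : Prop :=
  ∀ a x : α, (∃ x', IsCompl x x') →
    ∀ e : Set.Icc a (⊤ : α) ≃o Set.Icc (⊥ : α) x,
      ((fun b : α => ((e ⟨a ⊔ b, le_sup_left, le_top⟩ : Set.Icc (⊥ : α) x) : α)) ∈ M) →
      ∃ a', IsCompl a a'

/-- `L` is `M`-abelian: every idempotent of `M` is central in `M`. -/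
def MAbelian [CompleteLattice α] (M : Set (α → α)) : Prop :=
  ∀ ε ∈ M, ε ∘ ε = ε → ∀ φ ∈ M, ε ∘ φ = φ ∘ ε

/-- `a` is `M`-`L`-generated: it is a join of images of linear morphisms `L → [⊥, a]`
whose composites with the inclusion `ι_a` lie in `M`. -/
def MGenerated [CompleteLattice α] (M : Set (α → α)) (a : α) : Prop :=
  ∃ S : Set (α → α), S ⊆ M ∧ (∀ f ∈ S, ∀ x, f x ≤ a) ∧ (⨆ f ∈ S, f ⊤) = a

/-- A complete lattice is compact if every join representation of `⊤` has a finite subjoin. -/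
def CompactLat (α : Type*) [CompleteLattice α] : Prop :=
  ∀ s : Set α, sSup s = ⊤ → ∃ t : Finset α, ↑t ⊆ s ∧ sSup (↑t : Set α) = ⊤

/-- An element `c` is compact if the interval `[⊥, c]` is a compact lattice. -/
def CompactElt [CompleteLattice α] (c : α) : Prop :=
  ∀ s : Set α, (∀ a ∈ s, a ≤ c) → sSup s = c →
    ∃ t : Finset α, ↑t ⊆ s ∧ sSup (↑t : Set α) = c

/-- `x` is essential in `L`. -/
def Essential [CompleteLattice α] (x : α) : Prop := ∀ y, x ⊓ y = ⊥ → y = ⊥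

/-- `x` is essential in the interval `[⊥, c]`. -/
def EssentialIn [CompleteLattice α] (x c : α) : Prop :=
  x ≤ c ∧ ∀ y ≤ c, x ⊓ y = ⊥ → y = ⊥

/-- `x` is superfluous in `L`. -/
def Superfluous [CompleteLattice α] (x : α) : Prop := ∀ y, x ⊔ y = ⊤ → y = ⊤

/-- `x` is superfluous in the interval `[⊥, c]`. -/
def SuperfluousIn [CompleteLattice α] (x c : α) : Prop :=
  x ≤ c ∧ ∀ y ≤ c, x ⊔ y = c → y = c

/-- `M` contains all the projections. -/
def ContainsProjections [CompleteLattice α] (M : Set (α → α)) : Prop :=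
  ∀ x x' : α, IsCompl x x' → proj x x' ∈ M

/-- `L` is `M`-K-extending. -/
def MKExtending [CompleteLattice α] (M : Set (α → α)) : Prop :=
  ∀ φ ∈ M, ∃ c : α, (∃ c', IsCompl c c') ∧ EssentialIn (linKer φ) c

/-- `L` is `M`-K-nonsingular. -/
def MKNonsingular [CompleteLattice α] (M : Set (α → α)) : Prop :=
  ∀ φ ∈ M, Essential (linKer φ) → φ = fun _ => (⊥ : α)

/-- `L` is `M`-T-lifting. -/
def MTLifting [CompleteLattice α] (M : Set (α → α)) : Prop :=
  ∀ φ ∈ M, ∃ c c' : α, IsCompl c c' ∧ c ≤ φ ⊤ ∧ SuperfluousIn (φ ⊤ ⊓ c') c'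

end Preamble

/-!
Endoregularity gives `ψ ∈ M` with `φ ψ φ = φ`, so `ψ φ` and `φ ψ` are idempotents of `M`, and by
abelianness they commute with `φ`. If `φ` is injective, cancelling `φ` in `φ ψ φ = φ` and in
`φ (φ ψ) = φ ψ φ = φ` shows that `ψ` is a two-sided inverse; if `φ` is surjective, cancelling on
the right in `φ ψ φ = φ` and in `(ψ φ) φ = φ ψ φ = φ` does the same. Since linear morphisms are
monotone, `φ` is then an order isomorphism.
-/

theorem IsLinMor.monotone {α β : Type*} [CompleteLattice α] [CompleteLattice β] {φ : α → β}
    (h : IsLinMor φ) : Monotone φ := by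
  obtain ⟨k, hk, e, he⟩ := h
  intro x y hxy
  rw [hk x, hk y, ← he ⟨x ⊔ k, le_sup_right, le_top⟩, ← he ⟨y ⊔ k, le_sup_right, le_top⟩]
  exact e.monotone (sup_le_sup_right hxy k)

theorem exists_inner_inverse_commuting_of_abelian_endoregular {α : Type*} [CompleteLattice α]
    {M : Set (α → α)} (hM : IsLinSubmonoid M) (hab : MAbelian M) (hreg : MEndoregular M)
    {φ : α → α} (hφ : φ ∈ M) :
    ∃ ψ ∈ M, φ ∘ ψ ∘ φ = φ ∧ (ψ ∘ φ) ∘ φ = φ ∘ (ψ ∘ φ) ∧ (φ ∘ ψ) ∘ φ = φ ∘ (φ ∘ ψ) := by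
  obtain ⟨ψ, hψ, hφψφ⟩ := hreg φ hφ
  have idem_left : (ψ ∘ φ) ∘ (ψ ∘ φ) = ψ ∘ φ := congrArg (ψ ∘ ·) hφψφ
  have idem_right : (φ ∘ ψ) ∘ (φ ∘ ψ) = φ ∘ ψ := congrArg (· ∘ ψ) hφψφ
  exact ⟨ψ, hψ, hφψφ, hab _ (hM.comp_mem ψ hψ φ hφ) idem_left φ hφ,
    hab _ (hM.comp_mem φ hφ ψ hψ) idem_right φ hφ⟩

section InnerInverse

variable {α : Type*} {φ ψ : α → α}

theorem Function.Injective.leftInverse_of_comp_comp_eq (hinj : Injective φ)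
    (h : φ ∘ ψ ∘ φ = φ) : LeftInverse ψ φ :=
  fun x => hinj (congrFun h x)

theorem Function.Injective.rightInverse_of_comp_comp_eq (hinj : Injective φ)
    (h : φ ∘ ψ ∘ φ = φ) (hcomm : (φ ∘ ψ) ∘ φ = φ ∘ (φ ∘ ψ)) : RightInverse ψ φ := by
  intro x
  apply hinj
  calc φ (φ (ψ x)) = φ (ψ (φ x)) := (congrFun hcomm x).symm
    _ = φ x := congrFun h x

theorem Function.Surjective.rightInverse_of_comp_comp_eq (hsurj : Surjective φ)
    (h : φ ∘ ψ ∘ φ = φ) : RightInverse ψ φ := by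
  intro x
  obtain ⟨y, rfl⟩ := hsurj x
  exact congrFun h y

theorem Function.Surjective.leftInverse_of_comp_comp_eq (hsurj : Surjective φ)
    (h : φ ∘ ψ ∘ φ = φ) (hcomm : (ψ ∘ φ) ∘ φ = φ ∘ (ψ ∘ φ)) : LeftInverse ψ φ := by
  intro x
  obtain ⟨y, rfl⟩ := hsurj x
  calc ψ (φ (φ y)) = φ (ψ (φ y)) := congrFun hcomm y
    _ = φ y := congrFun h y

end InnerInverse

theorem exists_orderIso_of_monotone_of_inverses {α β : Type*} [Preorder α] [Preorder β]
    {φ : α → β} {ψ : β → α} (hφ : Monotone φ) (hψ : Monotone ψ) (hl : Function.LeftInverse ψ φ)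
    (hr : Function.RightInverse ψ φ) : ∃ e : α ≃o β, ∀ x, e x = φ x :=
  ⟨Equiv.toOrderIso ⟨φ, ψ, hl, hr⟩ hφ hψ, fun _ => rfl⟩

theorem bijective_of_exists_orderIso {α β : Type*} [Preorder α] [Preorder β] {φ : α → β}
    (h : ∃ e : α ≃o β, ∀ x, e x = φ x) : Function.Bijective φ := by
  obtain ⟨e, he⟩ := h
  exact funext he ▸ e.bijective

theorem stmt_12_general {α : Type*} [CompleteLattice α]
    (M : Set (α → α)) (hM : IsLinSubmonoid M)
    (hab : MAbelian M) (hreg : MEndoregular M)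
    (φ : α → α) (hφ : φ ∈ M) :
    (Function.Injective φ ↔ ∃ e : α ≃o α, ∀ x, e x = φ x) ∧
    (Function.Surjective φ ↔ ∃ e : α ≃o α, ∀ x, e x = φ x) := by
  obtain ⟨ψ, hψ, hφψφ, hcomm_left, hcomm_right⟩ :=
    exists_inner_inverse_commuting_of_abelian_endoregular hM hab hreg hφ
  have iso := exists_orderIso_of_monotone_of_inverses
    (hM.lin_mem φ hφ).monotone (hM.lin_mem ψ hψ).monotone
  refine ⟨⟨fun hinj => iso (hinj.leftInverse_of_comp_comp_eq hφψφ)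
      (hinj.rightInverse_of_comp_comp_eq hφψφ hcomm_right),
    fun h => (bijective_of_exists_orderIso h).injective⟩,
    ⟨fun hsurj => iso (hsurj.leftInverse_of_comp_comp_eq hφψφ hcomm_left)
      (hsurj.rightInverse_of_comp_comp_eq hφψφ),
    fun h => (bijective_of_exists_orderIso h).surjective⟩⟩

/-- In an `M`-abelian-endoregular lattice, a member `φ ∈ M` is injective iff
it is a lattice isomorphism of `L` iff it is surjective. -/
theorem stmt_12 {α : Type*} [CompleteLattice α] [IsModularLattice α]
    (M : Set (α → α)) (hM : IsLinSubmonoid M)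
    (hab : MAbelian M) (hreg : MEndoregular M)
    (φ : α → α) (hφ : φ ∈ M) :
    (Function.Injective φ ↔ ∃ e : α ≃o α, ∀ x, e x = φ x) ∧
    (Function.Surjective φ ↔ ∃ e : α ≃o α, ∀ x, e x = φ x) :=
  stmt_12_general M hM hab hreg φ hφ
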